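/- Let N ≥ 1 be an integer and λ > 0. Then the function ψ_0(x) = ∏_{j=1}^N e^{−x_j²/2} · ∏_{1≤j<k≤N} (x_k − x_j)^λ satisfies H ψ_0 = E_0 ψ_0 on the open set {x ∈ ℝ^N : x_1 < x_2 < ⋯ < x_N}, where E_0 = N(1 + λ(N−1)). -/

import Mathlib

/-- Partial derivative in the `j`-th coordinate of a function on `ℝ^N`. -/
noncomputable def pd {N : ℕ} (j : Fin N) (f : (Fin N → ℝ) → ℝ) : (Fin N → ℝ) → ℝ :=
  fun x => deriv (fun t => f (Function.update x j t)) (x j)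

/-- The Calogero Hamiltonian with coupling `lam` in `N` variables. -/
noncomputable def calogeroH (N : ℕ) (lam : ℝ) (f : (Fin N → ℝ) → ℝ) : (Fin N → ℝ) → ℝ :=
  fun x => (∑ j, (- pd j (pd j f) x + (x j)^2 * f x)) +
    2*lam*(lam-1) * ∑ j, ∑ k, (if j < k then f x / (x j - x k)^2 else 0)

/-- The ground state `ψ₀` of the Calogero model. -/
noncomputable def psi0 (N : ℕ) (lam : ℝ) (x : Fin N → ℝ) : ℝ :=
  (∏ j, Real.exp (-(x j)^2 / 2)) * ∏ j, ∏ k, (if j < k then (x k - x j) ^ lam else 1)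


open Finset Filter Real Topology


def Incr {N : ℕ} (x : Fin N → ℝ) : Prop := ∀ j k : Fin N, j < k → x j < x k

lemma Incr.ne' {N : ℕ} {x : Fin N → ℝ} (hx : Incr x) {j k : Fin N} (h : j ≠ k) : x j ≠ x k := by
  rcases lt_or_gt_of_ne h with h' | h'
  · exact (hx _ _ h').ne
  · exact (hx _ _ h').ne'

lemma eventually_incr {N : ℕ} {x : Fin N → ℝ} (hx : Incr x) (j : Fin N) :
    ∀ᶠ t in 𝓝 (x j), Incr (Function.update x j t) := by
  unfold Incr
  rw [Filter.eventually_all]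
  intro a
  rw [Filter.eventually_all]
  intro b
  by_cases hab : a < b
  · simp only [hab, forall_true_left]
    rcases eq_or_ne a j with rfl | ha
    · have hb : b ≠ a := hab.ne'
      filter_upwards [Iio_mem_nhds (hx a b hab)] with t ht
      simpa [Function.update_apply, hb] using ht
    · rcases eq_or_ne b j with rfl | hb
      · filter_upwards [Ioi_mem_nhds (hx a b hab)] with t ht
        simpa [Function.update_apply, ha] using ht
      · filter_upwards with t
        simp [Function.update_apply, ha, hb, hx a b hab]
  · filter_upwards with t h
    exact absurd h hab
noncomputable def Wf (N : ℕ) (lam : ℝ) (y : Fin N → ℝ) : ℝ :=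
  (∑ m, -(y m)^2/2) + lam * ∑ m, ∑ l, (if m < l then Real.log (y l - y m) else 0)

lemma psi0_eq_exp {N : ℕ} {lam : ℝ} {y : Fin N → ℝ} (hy : Incr y) :
    psi0 N lam y = Real.exp (Wf N lam y) := by
  unfold psi0 Wf
  rw [Real.exp_add, Real.exp_sum]
  congr 1
  rw [Finset.mul_sum, Real.exp_sum]
  refine Finset.prod_congr rfl fun m _ => ?_
  rw [Finset.mul_sum, Real.exp_sum]
  refine Finset.prod_congr rfl fun l _ => ?_
  by_cases h : m < l
  · simp only [h, if_true, mul_ite, mul_zero]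
    rw [Real.rpow_def_of_pos (by linarith [hy m l h]), mul_comm]
  · simp [h]
lemma hasDerivAt_W {N : ℕ} (lam : ℝ) {y : Fin N → ℝ} (hy : Incr y) (j : Fin N) :
    HasDerivAt (fun t => Wf N lam (Function.update y j t))
      (-(y j) + lam * ∑ k, if k ≠ j then (y j - y k)⁻¹ else 0) (y j) := by
  have h1 : HasDerivAt (fun t => ∑ m, -(Function.update y j t m)^2/2)
      (∑ m : Fin N, if m = j then -(y j) else 0) (y j) := by
    apply HasDerivAt.fun_sum
    intro m _
    rcases eq_or_ne m j with rfl | hm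
    · simp only [Function.update_self, if_pos rfl]
      have h := ((hasDerivAt_pow 2 (y m)).neg).div_const 2
      refine h.congr_deriv ?_
      norm_num
      ring
    · simp only [Function.update_of_ne hm, if_neg hm]
      exact hasDerivAt_const _ _
  have h2 : HasDerivAt (fun t => ∑ m, ∑ l,
        (if m < l then Real.log (Function.update y j t l - Function.update y j t m) else 0))
      (∑ m : Fin N, ∑ l : Fin N, ((if m = j ∧ m < l then (y j - y l)⁻¹ else 0)
        + (if l = j ∧ m < l then (y j - y m)⁻¹ else 0))) (y j) := by
    apply HasDerivAt.fun_sum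
    intro m _
    apply HasDerivAt.fun_sum
    intro l _
    by_cases hml : m < l
    · rcases eq_or_ne m j with rfl | hm
      · have hl : l ≠ m := hml.ne'
        simp only [if_pos hml, Function.update_self, Function.update_of_ne hl,
          hml, if_pos (And.intro rfl hml), and_true, if_neg (fun h : l = m ∧ _ => hl h.1)]
        have h0 : y l - y m ≠ 0 := sub_ne_zero.2 (hy m l hml).ne'
        have hd := ((hasDerivAt_id (y m)).const_sub (y l)).log h0
        refine hd.congr_deriv ?_
        rw [div_eq_mul_inv, neg_one_mul, ← inv_neg, neg_sub]
        simp
      · rcases eq_or_ne l j with rfl | hl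
        · simp only [if_pos hml, Function.update_self, Function.update_of_ne hm,
            if_neg (fun h : m = l ∧ _ => hm h.1), if_pos (And.intro rfl hml)]
          have h0 : y l - y m ≠ 0 := sub_ne_zero.2 (hy m l hml).ne'
          have hd := ((hasDerivAt_id (y l)).sub_const (y m)).log h0
          refine hd.congr_deriv ?_
          simp [hml, one_div]
        · simp only [if_pos hml, Function.update_of_ne hm, Function.update_of_ne hl,
            if_neg (fun h : m = j ∧ _ => hm h.1), if_neg (fun h : l = j ∧ _ => hl h.1)]
          simpa using hasDerivAt_const (y j) (Real.log (y l - y m))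
    · simp only [if_neg hml, if_neg (fun h : _ ∧ m < l => hml h.2),
        if_neg (fun h : _ ∧ m < l => hml h.2)]
      simpa using hasDerivAt_const (y j) (0:ℝ)
  have hD : (∑ m : Fin N, ∑ l : Fin N, ((if m = j ∧ m < l then (y j - y l)⁻¹ else 0)
        + (if l = j ∧ m < l then (y j - y m)⁻¹ else 0)))
      = ∑ k, if k ≠ j then (y j - y k)⁻¹ else 0 := by
    simp only [Finset.sum_add_distrib]
    have eA : (∑ m : Fin N, ∑ l : Fin N, if m = j ∧ m < l then (y j - y l)⁻¹ else 0)
        = ∑ l : Fin N, (if j < l then (y j - y l)⁻¹ else 0) := by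
      rw [Finset.sum_eq_single j]
      · simp
      · intro m _ hm
        exact Finset.sum_eq_zero fun l _ => by simp [ite_and, hm]
      · simp
    have eB : (∑ m : Fin N, ∑ l : Fin N, if l = j ∧ m < l then (y j - y m)⁻¹ else 0)
        = ∑ m : Fin N, (if m < j then (y j - y m)⁻¹ else 0) := by
      refine Finset.sum_congr rfl fun m _ => ?_
      simp [ite_and]
    rw [eA, eB, ← Finset.sum_add_distrib]
    refine Finset.sum_congr rfl fun k _ => ?_
    rcases lt_trichotomy k j with h | h | h
    · simp [h, asymm h, h.ne]
    · subst h; simp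
    · simp [h, asymm h, h.ne']
  have h3 := h1.add (h2.const_mul lam)
  rw [hD] at h3
  have hs : (∑ m : Fin N, if m = j then -(y j) else 0) = -(y j) := by simp
  rw [hs] at h3
  exact h3

lemma hasDerivAt_psi0 {N : ℕ} (lam : ℝ) {y : Fin N → ℝ} (hy : Incr y) (j : Fin N) :
    HasDerivAt (fun t => psi0 N lam (Function.update y j t))
      (psi0 N lam y * (-(y j) + lam * ∑ k, if k ≠ j then (y j - y k)⁻¹ else 0)) (y j) := by
  have hE := (hasDerivAt_W lam hy j).exp
  rw [Function.update_eq_self] at hE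
  rw [← psi0_eq_exp hy] at hE
  refine hE.congr_of_eventuallyEq ?_
  filter_upwards [eventually_incr hy j] with t ht
  exact psi0_eq_exp ht

lemma pd_psi0 {N : ℕ} (lam : ℝ) {z : Fin N → ℝ} (hz : Incr z) (j : Fin N) :
    pd j (psi0 N lam) z
      = psi0 N lam z * (-(z j) + lam * ∑ k, if k ≠ j then (z j - z k)⁻¹ else 0) :=
  (hasDerivAt_psi0 lam hz j).deriv

lemma pd_pd_psi0 {N : ℕ} (lam : ℝ) {y : Fin N → ℝ} (hy : Incr y) (j : Fin N) :
    pd j (pd j (psi0 N lam)) y =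
      psi0 N lam y * (-(y j) + lam * ∑ k, if k ≠ j then (y j - y k)⁻¹ else 0)
        * (-(y j) + lam * ∑ k, if k ≠ j then (y j - y k)⁻¹ else 0)
      + psi0 N lam y * (-1 - lam * ∑ k, if k ≠ j then ((y j - y k)^2)⁻¹ else 0) := by
  have hLf : HasDerivAt (fun t => -t + lam * ∑ k, if k ≠ j then (t - y k)⁻¹ else 0)
      (-1 - lam * ∑ k, if k ≠ j then ((y j - y k)^2)⁻¹ else 0) (y j) := by
    have hsum : HasDerivAt (fun t => ∑ k, if k ≠ j then (t - y k)⁻¹ else 0)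
        (∑ k : Fin N, if k ≠ j then -(((y j - y k)^2)⁻¹) else 0) (y j) := by
      apply HasDerivAt.fun_sum
      intro k _
      by_cases hk : k ≠ j
      · simp only [if_pos hk]
        have h0 : y j - y k ≠ 0 := by
          rcases lt_or_gt_of_ne hk with h | h
          · exact (sub_ne_zero.2 (hy k j h).ne')
          · exact (sub_ne_zero.2 (hy j k h).ne)
        have hd := ((hasDerivAt_id (y j)).sub_const (y k)).inv h0
        refine hd.congr_deriv ?_
        simp [neg_div]
      · simp only [if_neg hk]
        simpa using hasDerivAt_const (y j) (0:ℝ)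
    have h := (hasDerivAt_id (y j)).neg.add (hsum.const_mul lam)
    refine h.congr_deriv ?_
    have : (∑ k : Fin N, if k ≠ j then -(((y j - y k)^2)⁻¹) else 0)
        = -∑ k : Fin N, if k ≠ j then ((y j - y k)^2)⁻¹ else 0 := by
      rw [← Finset.sum_neg_distrib]
      exact Finset.sum_congr rfl fun k _ => by split <;> simp
    rw [this]
    ring
  have hprod := (hasDerivAt_psi0 lam hy j).mul hLf
  have heq : (fun t => pd j (psi0 N lam) (Function.update y j t)) =ᶠ[𝓝 (y j)]
      (fun t => psi0 N lam (Function.update y j t)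
        * (-t + lam * ∑ k, if k ≠ j then (t - y k)⁻¹ else 0)) := by
    filter_upwards [eventually_incr hy j] with t ht
    rw [pd_psi0 lam ht j]
    congr 2
    · rw [Function.update_self]
    · rw [Function.update_self]
      congr 1
      exact Finset.sum_congr rfl fun k _ => by
        by_cases hk : k ≠ j
        · rw [if_pos hk, if_pos hk, Function.update_of_ne hk]
        · rw [if_neg hk, if_neg hk]
  have : pd j (pd j (psi0 N lam)) y
      = deriv (fun t => pd j (psi0 N lam) (Function.update y j t)) (y j) := rfl
  rw [this, heq.deriv_eq, (show HasDerivAt (fun t => psi0 N lam (Function.update y j t) * (-t + lam * ∑ k, if k ≠ j then (t - y k)⁻¹ else 0)) _ (y j) from hprod).deriv]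
  simp only [Function.update_eq_self]


lemma sum_ne_swap {N : ℕ} (f : Fin N → Fin N → ℝ) :
    ∑ j, ∑ k, (if j ≠ k then f j k else 0) = ∑ j, ∑ k, (if j ≠ k then f k j else 0) := by
  rw [Finset.sum_comm]
  exact Finset.sum_congr rfl fun k _ => Finset.sum_congr rfl fun j _ =>
    if_congr ne_comm rfl rfl

lemma sum_cyc {N : ℕ} (G : Fin N → Fin N → Fin N → ℝ) :
    ∑ j, ∑ k, ∑ l, G j k l = ∑ j, ∑ k, ∑ l, G k l j := by
  conv_rhs => rw [Finset.sum_comm]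
  refine Finset.sum_congr rfl fun b _ => ?_
  conv_rhs => rw [Finset.sum_comm]

lemma sym2 {N : ℕ} (s : Fin N → Fin N → ℝ) (hs : ∀ j k, s j k = s k j) :
    ∑ j, ∑ k, (if j ≠ k then s j k else 0) = 2 * ∑ j, ∑ k, (if j < k then s j k else 0) := by
  have e1 : ∀ j k : Fin N, (if j ≠ k then s j k else 0)
      = (if j < k then s j k else 0) + (if k < j then s j k else 0) := by
    intro j k
    rcases lt_trichotomy j k with h | h | h
    · simp [h, asymm h, h.ne]
    · subst h; simp
    · simp [h, asymm h, h.ne']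
  calc ∑ j, ∑ k, (if j ≠ k then s j k else 0)
      = ∑ j, ∑ k, ((if j < k then s j k else 0) + (if k < j then s j k else 0)) := by
        exact Finset.sum_congr rfl fun j _ => Finset.sum_congr rfl fun k _ => e1 j k
    _ = (∑ j, ∑ k, (if j < k then s j k else 0)) + ∑ j, ∑ k, (if k < j then s j k else 0) := by
        simp [Finset.sum_add_distrib]
    _ = 2 * ∑ j, ∑ k, (if j < k then s j k else 0) := by
        have : (∑ j, ∑ k, (if k < j then s j k else 0)) = ∑ j, ∑ k, (if j < k then s j k else 0) := by
          rw [Finset.sum_comm]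
          exact Finset.sum_congr rfl fun j _ => Finset.sum_congr rfl fun k _ => by
            rcases lt_or_ge j k with h | h
            · simp [h, hs j k]
            · simp [not_lt.2 h]
        rw [this]; ring

lemma cyc_zero {N : ℕ} (x : Fin N → ℝ) (hne : ∀ j k : Fin N, j ≠ k → x j ≠ x k) :
    ∑ j, ∑ k, ∑ l, (if k ≠ j ∧ l ≠ j ∧ k ≠ l then (x j - x k)⁻¹ * (x j - x l)⁻¹ else 0) = 0 := by
  set H : Fin N → Fin N → Fin N → ℝ :=
    fun a b c => if b ≠ a ∧ c ≠ a ∧ b ≠ c then (x a - x b)⁻¹ * (x a - x c)⁻¹ else 0 with hH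
  have key : ∀ a b c : Fin N, H a b c + H b c a + H c a b = 0 := by
    intro a b c
    by_cases hab : a = b
    · subst hab; simp [hH]
    by_cases hac : a = c
    · subst hac; simp [hH, hab]
    by_cases hbc : b = c
    · subst hbc; simp [hH, hab, Ne.symm hab]
    · have h1 : x a - x b ≠ 0 := sub_ne_zero.2 (hne a b hab)
      have h2 : x a - x c ≠ 0 := sub_ne_zero.2 (hne a c hac)
      have h3 : x b - x c ≠ 0 := sub_ne_zero.2 (hne b c hbc)
      have h1' : x b - x a ≠ 0 := sub_ne_zero.2 (hne b a (Ne.symm hab))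
      have h2' : x c - x a ≠ 0 := sub_ne_zero.2 (hne c a (Ne.symm hac))
      have h3' : x c - x b ≠ 0 := sub_ne_zero.2 (hne c b (Ne.symm hbc))
      simp only [hH, if_pos (And.intro (Ne.symm hab) (And.intro (Ne.symm hac) hbc)),
        if_pos (And.intro (Ne.symm hbc) (And.intro hab (Ne.symm hac))),
        if_pos (And.intro hac (And.intro hbc hab))]
      field_simp
      ring
  have c1 : ∑ j, ∑ k, ∑ l, H j k l = ∑ j, ∑ k, ∑ l, H k l j := sum_cyc H
  have c2 : ∑ j, ∑ k, ∑ l, H k l j = ∑ j, ∑ k, ∑ l, H l j k := by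
    have := sum_cyc (fun a b c => H b c a)
    simpa using this
  have hz : (∑ j, ∑ k, ∑ l, H j k l) + (∑ j, ∑ k, ∑ l, H k l j)
      + (∑ j, ∑ k, ∑ l, H l j k) = 0 := by
    have hsplit : ∑ j : Fin N, ∑ k : Fin N, ∑ l : Fin N, (H j k l + H k l j + H l j k)
        = (∑ j, ∑ k, ∑ l, H j k l) + (∑ j, ∑ k, ∑ l, H k l j)
          + (∑ j, ∑ k, ∑ l, H l j k) := by
      simp [Finset.sum_add_distrib]
    rw [← hsplit]
    apply Finset.sum_eq_zero; intro j _
    apply Finset.sum_eq_zero; intro k _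
    apply Finset.sum_eq_zero; intro l _
    exact key j k l
  rw [← c1, ← (c1.trans c2)] at hz
  linarith

lemma T_sq_eq_S {N : ℕ} (x : Fin N → ℝ) (hne : ∀ j k : Fin N, j ≠ k → x j ≠ x k) :
    ∑ j, (∑ k, if k ≠ j then (x j - x k)⁻¹ else 0)^2
      = ∑ j, (∑ k, if k ≠ j then ((x j - x k)^2)⁻¹ else 0) := by
  have expand : ∀ j : Fin N, (∑ k, if k ≠ j then (x j - x k)⁻¹ else 0)^2
      = (∑ k, if k ≠ j then ((x j - x k)^2)⁻¹ else 0)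
        + ∑ k, ∑ l, (if k ≠ j ∧ l ≠ j ∧ k ≠ l then (x j - x k)⁻¹ * (x j - x l)⁻¹ else 0) := by
    intro j
    rw [sq, Finset.sum_mul_sum]
    have term : ∀ k l : Fin N,
        (if k ≠ j then (x j - x k)⁻¹ else 0) * (if l ≠ j then (x j - x l)⁻¹ else 0)
        = (if k = l then (if k ≠ j then ((x j - x k)^2)⁻¹ else 0) else 0)
          + (if k ≠ j ∧ l ≠ j ∧ k ≠ l then (x j - x k)⁻¹ * (x j - x l)⁻¹ else 0) := by
      intro k l
      by_cases hkl : k = l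
      · subst hkl
        by_cases hk : k ≠ j
        · have hc : ¬(k ≠ j ∧ k ≠ j ∧ k ≠ k) := fun h => h.2.2 rfl
          rw [if_pos hk, if_pos rfl, if_neg hc, add_zero, sq, mul_inv, if_pos hk]
        · rw [not_not] at hk
          simp [hk]
      · by_cases hk : k = j
        · simp [hk]
        · by_cases hl : l = j
          · simp [hl, hk]
          · simp [hk, hl, hkl]
    calc (∑ k : Fin N, ∑ l : Fin N,
          (if k ≠ j then (x j - x k)⁻¹ else 0) * (if l ≠ j then (x j - x l)⁻¹ else 0))
        = ∑ k : Fin N, ∑ l : Fin N,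
          ((if k = l then (if k ≠ j then ((x j - x k)^2)⁻¹ else 0) else 0)
          + (if k ≠ j ∧ l ≠ j ∧ k ≠ l then (x j - x k)⁻¹ * (x j - x l)⁻¹ else 0)) := by
          exact Finset.sum_congr rfl fun k _ => Finset.sum_congr rfl fun l _ => term k l
      _ = _ := by
          simp only [Finset.sum_add_distrib]
          congr 1
          exact Finset.sum_congr rfl fun k _ => by simp
  calc ∑ j, (∑ k, if k ≠ j then (x j - x k)⁻¹ else 0)^2
      = ∑ j, ((∑ k, if k ≠ j then ((x j - x k)^2)⁻¹ else 0)
        + ∑ k, ∑ l, (if k ≠ j ∧ l ≠ j ∧ k ≠ l then (x j - x k)⁻¹ * (x j - x l)⁻¹ else 0)) :=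
        Finset.sum_congr rfl fun j _ => expand j
    _ = _ := by
        rw [Finset.sum_add_distrib, cyc_zero x hne, add_zero]

lemma count_ne {N : ℕ} : ∑ j : Fin N, ∑ k : Fin N, (if j ≠ k then (1:ℝ) else 0) = N * (N - 1) := by
  have inner : ∀ j : Fin N, ∑ k : Fin N, (if j ≠ k then (1:ℝ) else 0) = (N:ℝ) - 1 := by
    intro j
    have : ∀ k : Fin N, (if j ≠ k then (1:ℝ) else 0) = 1 - (if j = k then 1 else 0) := by
      intro k; by_cases h : j = k <;> simp [h]
    rw [Finset.sum_congr rfl fun k _ => this k, Finset.sum_sub_distrib]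
    simp
  rw [Finset.sum_congr rfl fun j _ => inner j]
  simp [mul_comm]
  ring

lemma xT_sum {N : ℕ} (x : Fin N → ℝ) (hne : ∀ j k : Fin N, j ≠ k → x j ≠ x k) :
    2 * ∑ j, (x j * ∑ k, if k ≠ j then (x j - x k)⁻¹ else 0) = N * (N - 1) := by
  have step : ∀ j : Fin N, x j * (∑ k, if k ≠ j then (x j - x k)⁻¹ else 0)
      = ∑ k, if j ≠ k then x j * (x j - x k)⁻¹ else 0 := by
    intro j
    rw [Finset.mul_sum]
    exact Finset.sum_congr rfl fun k _ => by
      by_cases h : k = j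
      · simp [h]
      · simp [h, Ne.symm h]
  rw [Finset.sum_congr rfl fun j _ => step j]
  have swap := sum_ne_swap (N := N) (fun j k => x j * (x j - x k)⁻¹)
  have comb : (∑ j, ∑ k, (if j ≠ k then x j * (x j - x k)⁻¹ else 0))
      + (∑ j, ∑ k, (if j ≠ k then x k * (x k - x j)⁻¹ else 0))
      = ∑ j : Fin N, ∑ k : Fin N, (if j ≠ k then (1:ℝ) else 0) := by
    rw [← Finset.sum_add_distrib]
    refine Finset.sum_congr rfl fun j _ => ?_
    rw [← Finset.sum_add_distrib]
    refine Finset.sum_congr rfl fun k _ => ?_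
    by_cases h : j ≠ k
    · simp only [if_pos h]
      have h1 : x j - x k ≠ 0 := sub_ne_zero.2 (hne j k h)
      have h2 : x k - x j ≠ 0 := sub_ne_zero.2 (hne k j (Ne.symm h))
      field_simp
      ring
    · simp [h]
  rw [two_mul]
  nth_rewrite 2 [swap]
  rw [comb, count_ne]

lemma scalar_key {N : ℕ} (lam : ℝ) (x : Fin N → ℝ) (hne : ∀ j k : Fin N, j ≠ k → x j ≠ x k) :
    (∑ j, (-((-(x j) + lam * ∑ k, if k ≠ j then (x j - x k)⁻¹ else 0)
          * (-(x j) + lam * ∑ k, if k ≠ j then (x j - x k)⁻¹ else 0))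
        + 1 + lam * (∑ k, if k ≠ j then ((x j - x k)^2)⁻¹ else 0) + (x j)^2))
      + 2*lam*(lam-1) * (∑ j, ∑ k, if j < k then ((x j - x k)^2)⁻¹ else 0)
    = N * (1 + lam * (N - 1)) := by
  have hS : (∑ j, ∑ k : Fin N, if k ≠ j then ((x j - x k)^2)⁻¹ else 0)
      = 2 * (∑ j, ∑ k, if j < k then ((x j - x k)^2)⁻¹ else 0) := by
    have e : (∑ j, ∑ k : Fin N, if k ≠ j then ((x j - x k)^2)⁻¹ else 0)
        = ∑ j, ∑ k : Fin N, if j ≠ k then ((x j - x k)^2)⁻¹ else 0 :=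
      Finset.sum_congr rfl fun j _ => Finset.sum_congr rfl fun k _ =>
        if_congr ne_comm rfl rfl
    rw [e, sym2 _ (fun j k => by rw [show (x j - x k)^2 = (x k - x j)^2 by ring])]
  have hT2 := T_sq_eq_S x hne
  have hxT := xT_sum x hne
  have expand : ∀ j : Fin N,
      (-((-(x j) + lam * ∑ k, if k ≠ j then (x j - x k)⁻¹ else 0)
          * (-(x j) + lam * ∑ k, if k ≠ j then (x j - x k)⁻¹ else 0))
        + 1 + lam * (∑ k, if k ≠ j then ((x j - x k)^2)⁻¹ else 0) + (x j)^2)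
      = 1 + lam * (∑ k, if k ≠ j then ((x j - x k)^2)⁻¹ else 0)
        + (2*lam) * (x j * ∑ k, if k ≠ j then (x j - x k)⁻¹ else 0)
        - lam^2 * (∑ k, if k ≠ j then (x j - x k)⁻¹ else 0)^2 := fun j => by ring
  rw [Finset.sum_congr rfl fun j _ => expand j, Finset.sum_sub_distrib,
    Finset.sum_add_distrib, Finset.sum_add_distrib, ← Finset.mul_sum, ← Finset.mul_sum,
    ← Finset.mul_sum]
  have h1 : (∑ _j : Fin N, (1:ℝ)) = N := by simp
  rw [h1]
  linear_combination (lam - lam^2) * hS + lam * hxT - lam^2 * hT2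

theorem stmt_2 (N : ℕ) (hN : 1 ≤ N) (lam : ℝ) (hlam : 0 < lam) :
    ∀ x : Fin N → ℝ, (∀ j k : Fin N, j < k → x j < x k) →
      calogeroH N lam (psi0 N lam) x = (N * (1 + lam * (N - 1)) : ℝ) * psi0 N lam x := by
  intro x hx
  have hincr : Incr x := hx
  have hne : ∀ j k : Fin N, j ≠ k → x j ≠ x k := fun j k h => Incr.ne' hincr h
  simp only [calogeroH]
  have e1 : (∑ j, (- pd j (pd j (psi0 N lam)) x + (x j)^2 * psi0 N lam x))
      = psi0 N lam x * ∑ j, (-((-(x j) + lam * ∑ k, if k ≠ j then (x j - x k)⁻¹ else 0)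
            * (-(x j) + lam * ∑ k, if k ≠ j then (x j - x k)⁻¹ else 0))
          + 1 + lam * (∑ k, if k ≠ j then ((x j - x k)^2)⁻¹ else 0) + (x j)^2) := by
    rw [Finset.mul_sum]
    refine Finset.sum_congr rfl fun j _ => ?_
    rw [pd_pd_psi0 lam hincr j]
    ring
  have e2 : (∑ j, ∑ k : Fin N, (if j < k then psi0 N lam x / (x j - x k)^2 else 0))
      = psi0 N lam x * ∑ j, ∑ k : Fin N, (if j < k then ((x j - x k)^2)⁻¹ else 0) := by
    rw [Finset.mul_sum]
    refine Finset.sum_congr rfl fun j _ => ?_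
    rw [Finset.mul_sum]
    refine Finset.sum_congr rfl fun k _ => ?_
    split
    · rw [div_eq_mul_inv]
    · rw [mul_zero]
  rw [e1, e2]
  have key := scalar_key lam x hne
  linear_combination psi0 N lam x * key
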